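/- Assume ‖P_Ω P_T‖ ≤ 1/2 and λ ≤ 1/2, and suppose there exists a dual certificate W (P_T W = 0, ‖W‖ < 1/2, ‖P_Ω(UV* − λ·sgn(S₀) + W)‖_F ≤ λ/4, ‖P_{Ω⊥}(UV* + W)‖_∞ < λ/2). Let H = (H_L, H_S) be any pair with ‖X₀ + H‖_♦ ≤ ‖X₀‖_♦, where X₀ = (L₀, S₀). Write H^Γ = P_Γ(H) and H^{Γ⊥} = H − H^Γ, with components H^{Γ⊥}_L and H^{Γ⊥}_S. Then ‖P_{T⊥}(H^{Γ⊥}_L)‖_* + λ·‖P_{Ω⊥}(H^{Γ⊥}_S)‖_1 ≤ 4·‖H^Γ‖_♦. -/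

import Mathlib

/-!
Write `H^Γ = (M, M)` and `H^{Γ⊥} = (D, -D)`, so that `H = (M + D, M - D)`. The subgradient
inequalities of the nuclear norm at `L₀` (subgradient `UVᵀ + Z`, with `Z ⊥ T` dual to
`P_{T⊥} D`) and of the `ℓ₁` norm at `S₀`, together with the triangle inequality for `M`, turn
`‖X₀ + H‖_♦ ≤ ‖X₀‖_♦` into
`‖P_{T⊥} D‖_* + λ ‖P_{Ω⊥} D‖₁ ≤ ‖H^Γ‖_♦ - ⟪UVᵀ - λ sgn S₀, D⟫`.
Splitting `UVᵀ - λ sgn S₀ = (UVᵀ - λ sgn S₀ + W) - W`, the certificate bounds the inner product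
by `3/4` of the left-hand side: `W` through `‖W‖ < 1/2` on `T⊥`, the rest on `Ω` through
`‖P_Ω D‖_F ≤ ‖P_{Ω⊥} D‖₁ + 2 ‖P_{T⊥} D‖_*` (from `‖P_Ω P_T‖ ≤ 1/2`) and off `Ω` through the
`ℓ∞` bound.

For the nuclear norm, an orthonormal eigenbasis `P` of `AᵀA` gives `⟪Z, A⟫ = Σⱼ ⟪Z Pⱼ, A Pⱼ⟫`,
whence the duality with the spectral norm, attained by `A P diag(λ^{-1/2}) Pᵀ`.
-/

open Matrix BigOperators

noncomputable def frobNorm {m k : ℕ} (A : Matrix (Fin m) (Fin k) ℝ) : ℝ :=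
  Real.sqrt (∑ i, ∑ j, (A i j) ^ 2)

noncomputable def nuclearNorm {m k : ℕ} (A : Matrix (Fin m) (Fin k) ℝ) : ℝ :=
  ∑ i, Real.sqrt ((show (Aᵀ * A).IsHermitian by simpa using Matrix.isHermitian_conjTranspose_mul_self A).eigenvalues i)

def l1Norm {m k : ℕ} (A : Matrix (Fin m) (Fin k) ℝ) : ℝ :=
  ∑ i, ∑ j, |A i j|

noncomputable def linfNorm {m k : ℕ} (A : Matrix (Fin m) (Fin k) ℝ) : ℝ :=
  ⨆ i, ⨆ j, |A i j|

noncomputable def specNorm {m k : ℕ} (A : Matrix (Fin m) (Fin k) ℝ) : ℝ :=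
  ‖LinearMap.toContinuousLinearMap (Matrix.toEuclideanLin A)‖

def finner {m k : ℕ} (A B : Matrix (Fin m) (Fin k) ℝ) : ℝ :=
  ∑ i, ∑ j, A i j * B i j

noncomputable def projSet {n : ℕ} (Ω : Set (Fin n × Fin n)) (S : Matrix (Fin n) (Fin n) ℝ) :
    Matrix (Fin n) (Fin n) ℝ :=
  fun i j => Ω.indicator (fun p => S p.1 p.2) (i, j)

def suppSet {n : ℕ} (S : Matrix (Fin n) (Fin n) ℝ) : Set (Fin n × Fin n) :=
  {p | S p.1 p.2 ≠ 0}

noncomputable def sgnMat {n : ℕ} (S : Matrix (Fin n) (Fin n) ℝ) : Matrix (Fin n) (Fin n) ℝ :=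
  fun i j => Real.sign (S i j)

def Tspace {n r : ℕ} (U V : Matrix (Fin n) (Fin r) ℝ) : Set (Matrix (Fin n) (Fin n) ℝ) :=
  {X | ∃ Q R : Matrix (Fin n) (Fin r) ℝ, X = U * Qᵀ + R * Vᵀ}

def IsOrthProjOnto {n : ℕ} (P : Matrix (Fin n) (Fin n) ℝ →ₗ[ℝ] Matrix (Fin n) (Fin n) ℝ)
    (T : Set (Matrix (Fin n) (Fin n) ℝ)) : Prop :=
  (∀ X, P X ∈ T) ∧ (∀ X ∈ T, P X = X) ∧ (∀ X Y, Y ∈ T → finner (X - P X) Y = 0)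

noncomputable def pairFrob {n : ℕ} (X : Matrix (Fin n) (Fin n) ℝ × Matrix (Fin n) (Fin n) ℝ) : ℝ :=
  Real.sqrt (frobNorm X.1 ^ 2 + frobNorm X.2 ^ 2)

noncomputable def projGamma {n : ℕ} (X : Matrix (Fin n) (Fin n) ℝ × Matrix (Fin n) (Fin n) ℝ) :
    Matrix (Fin n) (Fin n) ℝ × Matrix (Fin n) (Fin n) ℝ :=
  ((1/2 : ℝ) • (X.1 + X.2), (1/2 : ℝ) • (X.1 + X.2))

open scoped Classical

noncomputable def suppFinset {n : ℕ} (S : Matrix (Fin n) (Fin n) ℝ) : Finset (Fin n × Fin n) :=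
  Finset.univ.filter (fun p => S p.1 p.2 ≠ 0)

section EuclideanVectors

variable {ι : Type*} [Fintype ι]

lemma norm_toLp_sq (x : ι → ℝ) : ‖(WithLp.toLp 2 x : EuclideanSpace ℝ ι)‖ ^ 2 = x ⬝ᵥ x := by
  rw [EuclideanSpace.norm_sq_eq]; simp [dotProduct, sq]

lemma dotProduct_le_sqrt_mul_sqrt (x y : ι → ℝ) : x ⬝ᵥ y ≤ √(x ⬝ᵥ x) * √(y ⬝ᵥ y) := by
  simpa only [dotProduct, ← sq] using Real.sum_mul_le_sqrt_mul_sqrt Finset.univ x y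

end EuclideanVectors

section SpectralNorm

variable {m k : ℕ}

lemma mulVec_dotProduct_self (A : Matrix (Fin m) (Fin k) ℝ) (x : Fin k → ℝ) :
    (A *ᵥ x) ⬝ᵥ (A *ᵥ x) = x ⬝ᵥ ((Aᵀ * A) *ᵥ x) := by
  rw [dotProduct_mulVec, ← vecMul_transpose, vecMul_vecMul, ← dotProduct_mulVec, ← mulVec_mulVec]

lemma transpose_mul_self_apply_self (M : Matrix (Fin m) (Fin k) ℝ) (j : Fin k) :
    (Mᵀ * M) j j = Mᵀ j ⬝ᵥ Mᵀ j :=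
  rfl

lemma dotProduct_mulVec_conj_diagonal (P : Matrix (Fin k) (Fin k) ℝ) (d x : Fin k → ℝ) :
    x ⬝ᵥ ((P * diagonal d * Pᵀ) *ᵥ x) = ∑ i, d i * (Pᵀ *ᵥ x) i ^ 2 := by
  rw [← mulVec_mulVec, ← mulVec_mulVec, dotProduct_mulVec, ← mulVec_transpose]
  simp only [dotProduct, mulVec_diagonal]
  exact Finset.sum_congr rfl fun i _ => by ring

lemma specNorm_nonneg (A : Matrix (Fin m) (Fin k) ℝ) : 0 ≤ specNorm A := norm_nonneg _

lemma mulVec_dotProduct_self_le (A : Matrix (Fin m) (Fin k) ℝ) (x : Fin k → ℝ) :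
    (A *ᵥ x) ⬝ᵥ (A *ᵥ x) ≤ specNorm A ^ 2 * (x ⬝ᵥ x) := by
  have h := (LinearMap.toContinuousLinearMap (toEuclideanLin A)).le_opNorm (WithLp.toLp 2 x)
  rw [← norm_toLp_sq, ← norm_toLp_sq, ← mul_pow]
  exact pow_le_pow_left₀ (norm_nonneg _) h 2

lemma specNorm_le_of_mulVec_dotProduct_self_le {A : Matrix (Fin m) (Fin k) ℝ} {c : ℝ}
    (hc : 0 ≤ c) (h : ∀ x, (A *ᵥ x) ⬝ᵥ (A *ᵥ x) ≤ c ^ 2 * (x ⬝ᵥ x)) : specNorm A ≤ c := by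
  refine ContinuousLinearMap.opNorm_le_bound _ hc fun x => ?_
  rw [← pow_le_pow_iff_left₀ (norm_nonneg _) (by positivity) two_ne_zero, mul_pow,
    ← x.toLp_ofLp, norm_toLp_sq, norm_toLp_sq]
  exact h x.ofLp

lemma mul_col_dotProduct_self_le (Z : Matrix (Fin m) (Fin k) ℝ) {r : ℕ}
    {P : Matrix (Fin k) (Fin r) ℝ} (hP : Pᵀ * P = 1) (j : Fin r) :
    (Z * P)ᵀ j ⬝ᵥ (Z * P)ᵀ j ≤ specNorm Z ^ 2 := by
  have hcol : (Z * P)ᵀ j = Z *ᵥ Pᵀ j := by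
    ext a; simp [mul_apply, mulVec, dotProduct]
  have hPj : Pᵀ j ⬝ᵥ Pᵀ j = 1 := by
    rw [← transpose_mul_self_apply_self, hP, one_apply_eq]
  simpa [hcol, hPj] using mulVec_dotProduct_self_le Z (Pᵀ j)

end SpectralNorm

section Frobenius

variable {m k l : ℕ}

lemma finner_eq_trace (A B : Matrix (Fin m) (Fin k) ℝ) : finner A B = trace (Aᵀ * B) := by
  simp only [finner, trace, diag, mul_apply, transpose_apply]
  exact Finset.sum_comm

lemma finner_add_left (A B C : Matrix (Fin m) (Fin k) ℝ) :
    finner (A + B) C = finner A C + finner B C := by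
  simp [finner_eq_trace, Matrix.add_mul]

lemma finner_add_right (A B C : Matrix (Fin m) (Fin k) ℝ) :
    finner A (B + C) = finner A B + finner A C := by
  simp [finner_eq_trace, Matrix.mul_add]

lemma finner_sub_left (A B C : Matrix (Fin m) (Fin k) ℝ) :
    finner (A - B) C = finner A C - finner B C := by
  simp [finner_eq_trace, Matrix.sub_mul]

lemma finner_sub_right (A B C : Matrix (Fin m) (Fin k) ℝ) :
    finner A (B - C) = finner A B - finner A C := by
  simp [finner_eq_trace, Matrix.mul_sub]

lemma finner_smul_left (c : ℝ) (A B : Matrix (Fin m) (Fin k) ℝ) :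
    finner (c • A) B = c * finner A B := by
  simp [finner_eq_trace]

lemma finner_mul_left (A : Matrix (Fin m) (Fin l) ℝ) (B : Matrix (Fin l) (Fin k) ℝ)
    (C : Matrix (Fin m) (Fin k) ℝ) : finner (A * B) C = finner B (Aᵀ * C) := by
  simp [finner_eq_trace, Matrix.mul_assoc]

lemma finner_mul_right (A : Matrix (Fin m) (Fin k) ℝ) (B : Matrix (Fin m) (Fin l) ℝ)
    (C : Matrix (Fin l) (Fin k) ℝ) : finner A (B * C) = finner (Bᵀ * A) C := by
  simp [finner_eq_trace, Matrix.mul_assoc]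

lemma finner_mul_transpose_right (A : Matrix (Fin m) (Fin k) ℝ) (B : Matrix (Fin m) (Fin l) ℝ)
    (C : Matrix (Fin k) (Fin l) ℝ) : finner A (B * Cᵀ) = finner (A * C) B := by
  rw [finner_eq_trace, finner_eq_trace, ← Matrix.mul_assoc, trace_mul_comm, transpose_mul,
    Matrix.mul_assoc]

lemma finner_self_eq_zero {A : Matrix (Fin m) (Fin k) ℝ} (h : finner A A = 0) : A = 0 :=
  trace_conjTranspose_mul_self_eq_zero_iff.mp (by simpa [finner_eq_trace] using h)

lemma finner_eq_sum_dotProduct (A B : Matrix (Fin m) (Fin k) ℝ) :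
    finner A B = ∑ j, Aᵀ j ⬝ᵥ Bᵀ j := by
  rw [finner_eq_trace]
  rfl

lemma frobNorm_eq_norm (A : Matrix (Fin m) (Fin k) ℝ) :
    frobNorm A = ‖(WithLp.toLp 2 fun p : Fin m × Fin k => A p.1 p.2 : EuclideanSpace ℝ _)‖ := by
  simp [EuclideanSpace.norm_eq, frobNorm, Fintype.sum_prod_type]

lemma frobNorm_nonneg (A : Matrix (Fin m) (Fin k) ℝ) : 0 ≤ frobNorm A :=
  Real.sqrt_nonneg _

lemma finner_eq_inner (A B : Matrix (Fin m) (Fin k) ℝ) :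
    finner A B = inner ℝ (WithLp.toLp 2 fun p : Fin m × Fin k => A p.1 p.2 : EuclideanSpace ℝ _)
      (WithLp.toLp 2 fun p : Fin m × Fin k => B p.1 p.2) := by
  simp [PiLp.inner_apply, finner, Fintype.sum_prod_type, mul_comm]

lemma abs_finner_le (A B : Matrix (Fin m) (Fin k) ℝ) :
    |finner A B| ≤ frobNorm A * frobNorm B := by
  rw [finner_eq_inner, frobNorm_eq_norm, frobNorm_eq_norm]
  exact abs_real_inner_le_norm _ _

lemma frobNorm_add_le (A B : Matrix (Fin m) (Fin k) ℝ) :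
    frobNorm (A + B) ≤ frobNorm A + frobNorm B := by
  have hadd : (WithLp.toLp 2 fun p : Fin m × Fin k => (A + B) p.1 p.2 : EuclideanSpace ℝ _) =
      WithLp.toLp 2 (fun p : Fin m × Fin k => A p.1 p.2) + WithLp.toLp 2 fun p => B p.1 p.2 := rfl
  simpa only [frobNorm_eq_norm, hadd] using norm_add_le _ _

lemma frobNorm_eq_sqrt_trace (A : Matrix (Fin m) (Fin k) ℝ) : frobNorm A = √(trace (Aᵀ * A)) := by
  rw [← finner_eq_trace, finner, frobNorm]
  simp only [sq]

lemma finner_mul_of_mul_transpose_eq_one {P : Matrix (Fin k) (Fin k) ℝ} (hP : P * Pᵀ = 1)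
    (X Y : Matrix (Fin m) (Fin k) ℝ) : finner (X * P) (Y * P) = finner X Y := by
  rw [finner_eq_trace, finner_eq_trace, transpose_mul, Matrix.mul_assoc, trace_mul_comm,
    Matrix.mul_assoc, Matrix.mul_assoc Y, hP, Matrix.mul_one]

lemma finner_diagonal_right (M : Matrix (Fin k) (Fin k) ℝ) (d : Fin k → ℝ) :
    finner M (diagonal d) = ∑ i, M i i * d i := by
  simp [finner_eq_trace, trace, mul_diagonal]

end Frobenius

section Entrywise

variable {m k : ℕ}

lemma l1Norm_nonneg (A : Matrix (Fin m) (Fin k) ℝ) : 0 ≤ l1Norm A :=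
  Finset.sum_nonneg fun _ _ => Finset.sum_nonneg fun _ _ => abs_nonneg _

lemma l1Norm_neg (A : Matrix (Fin m) (Fin k) ℝ) : l1Norm (-A) = l1Norm A := by
  simp [l1Norm]

lemma l1Norm_add_le (A B : Matrix (Fin m) (Fin k) ℝ) : l1Norm (A + B) ≤ l1Norm A + l1Norm B := by
  simp only [l1Norm, ← Finset.sum_add_distrib]
  exact Finset.sum_le_sum fun i _ => Finset.sum_le_sum fun j _ => abs_add_le _ _

lemma l1Norm_sub_le (A B : Matrix (Fin m) (Fin k) ℝ) : l1Norm (A - B) ≤ l1Norm A + l1Norm B := by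
  simpa [sub_eq_add_neg, l1Norm_neg] using l1Norm_add_le A (-B)

lemma abs_le_linfNorm (A : Matrix (Fin m) (Fin k) ℝ) (i : Fin m) (j : Fin k) :
    |A i j| ≤ linfNorm A :=
  (le_ciSup (Set.finite_range _).bddAbove j).trans
    (le_ciSup (f := fun i => ⨆ j, |A i j|) (Set.finite_range _).bddAbove i)

lemma linfNorm_nonneg (A : Matrix (Fin m) (Fin k) ℝ) : 0 ≤ linfNorm A :=
  Real.iSup_nonneg fun _ => Real.iSup_nonneg fun _ => abs_nonneg _

lemma abs_finner_le_linfNorm_mul_l1Norm (A B : Matrix (Fin m) (Fin k) ℝ) :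
    |finner A B| ≤ linfNorm A * l1Norm B := by
  simp only [finner, l1Norm, Finset.mul_sum]
  refine (Finset.abs_sum_le_sum_abs _ _).trans (Finset.sum_le_sum fun i _ => ?_)
  refine (Finset.abs_sum_le_sum_abs _ _).trans (Finset.sum_le_sum fun j _ => ?_)
  rw [abs_mul]
  exact mul_le_mul_of_nonneg_right (abs_le_linfNorm A i j) (abs_nonneg _)

lemma frobNorm_le_l1Norm (A : Matrix (Fin m) (Fin k) ℝ) : frobNorm A ≤ l1Norm A := by
  have h := Finset.sum_sq_le_sq_sum_of_nonneg (s := Finset.univ)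
    (f := fun p : Fin m × Fin k => |A p.1 p.2|) fun _ _ => abs_nonneg _
  simp only [sq_abs, Fintype.sum_prod_type] at h
  rw [frobNorm, Real.sqrt_le_left (l1Norm_nonneg A)]
  exact h

end Entrywise

section Support

variable {n : ℕ}

lemma projSet_apply (Ω : Set (Fin n × Fin n)) (X : Matrix (Fin n) (Fin n) ℝ) (i j : Fin n) :
    projSet Ω X i j = if (i, j) ∈ Ω then X i j else 0 :=
  Set.indicator_apply _ _ _

lemma sub_projSet_apply (Ω : Set (Fin n × Fin n)) (X : Matrix (Fin n) (Fin n) ℝ) (i j : Fin n) :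
    (X - projSet Ω X) i j = if (i, j) ∈ Ω then 0 else X i j := by
  rw [Matrix.sub_apply, projSet_apply]
  split_ifs <;> simp

lemma projSet_add (Ω : Set (Fin n × Fin n)) (X Y : Matrix (Fin n) (Fin n) ℝ) :
    projSet Ω (X + Y) = projSet Ω X + projSet Ω Y := by
  ext i j
  simp only [Matrix.add_apply, projSet_apply]
  split_ifs <;> simp

lemma projSet_neg (Ω : Set (Fin n × Fin n)) (X : Matrix (Fin n) (Fin n) ℝ) :
    projSet Ω (-X) = -projSet Ω X := by
  ext i j
  simp only [Matrix.neg_apply, projSet_apply]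
  split_ifs <;> simp

lemma frobNorm_projSet_le (Ω : Set (Fin n × Fin n)) (X : Matrix (Fin n) (Fin n) ℝ) :
    frobNorm (projSet Ω X) ≤ frobNorm X := by
  refine Real.sqrt_le_sqrt (Finset.sum_le_sum fun i _ => Finset.sum_le_sum fun j _ => ?_)
  rw [projSet_apply]
  split_ifs <;> simp [sq_nonneg]

lemma finner_eq_finner_projSet_add (Ω : Set (Fin n × Fin n)) (X Y : Matrix (Fin n) (Fin n) ℝ) :
    finner X Y =
      finner (projSet Ω X) (projSet Ω Y) + finner (X - projSet Ω X) (Y - projSet Ω Y) := by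
  simp only [finner, ← Finset.sum_add_distrib, projSet_apply, sub_projSet_apply]
  refine Finset.sum_congr rfl fun i _ => Finset.sum_congr rfl fun j _ => ?_
  split_ifs <;> simp

lemma abs_sub_ge_sign (s d : ℝ) : |s| - Real.sign s * d + (if s ≠ 0 then 0 else |d|) ≤ |s - d| := by
  rcases lt_trichotomy s 0 with h | rfl | h
  · rw [Real.sign_of_neg h, if_pos h.ne, abs_of_neg h]
    linarith [neg_le_abs (s - d)]
  · simp
  · rw [Real.sign_of_pos h, if_pos h.ne', abs_of_pos h]
    linarith [le_abs_self (s - d)]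

lemma l1Norm_sub_ge (S D : Matrix (Fin n) (Fin n) ℝ) :
    l1Norm S - finner (sgnMat S) D + l1Norm (D - projSet (suppSet S) D) ≤ l1Norm (S - D) := by
  simp only [l1Norm, finner, ← Finset.sum_sub_distrib, ← Finset.sum_add_distrib]
  refine Finset.sum_le_sum fun i _ => Finset.sum_le_sum fun j _ => ?_
  have h := abs_sub_ge_sign (S i j) (D i j)
  rw [sub_projSet_apply, Matrix.sub_apply]
  simp only [suppSet, Set.mem_ofPred_eq, sgnMat]
  split_ifs at h ⊢ <;> simp_all

end Support

section NuclearNorm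

variable {m k : ℕ}

lemma isHermitian_transpose_mul_self (A : Matrix (Fin m) (Fin k) ℝ) : (Aᵀ * A).IsHermitian := by
  simpa using isHermitian_conjTranspose_mul_self A

noncomputable def gramEigenvalues (A : Matrix (Fin m) (Fin k) ℝ) : Fin k → ℝ :=
  (isHermitian_transpose_mul_self A).eigenvalues

noncomputable def gramEigenvectors (A : Matrix (Fin m) (Fin k) ℝ) : Matrix (Fin k) (Fin k) ℝ :=
  (isHermitian_transpose_mul_self A).eigenvectorUnitary

lemma nuclearNorm_eq_sum_sqrt (A : Matrix (Fin m) (Fin k) ℝ) :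
    nuclearNorm A = ∑ i, √(gramEigenvalues A i) :=
  rfl

lemma gramEigenvalues_nonneg (A : Matrix (Fin m) (Fin k) ℝ) (i : Fin k) :
    0 ≤ gramEigenvalues A i := by
  have h : (Aᵀ * A).PosSemidef := by simpa using posSemidef_conjTranspose_mul_self A
  exact h.eigenvalues_nonneg i

lemma gramEigenvectors_transpose_mul (A : Matrix (Fin m) (Fin k) ℝ) :
    (gramEigenvectors A)ᵀ * gramEigenvectors A = 1 := by
  simpa [gramEigenvectors, star_eq_conjTranspose] using
    mem_unitaryGroup_iff'.mp (isHermitian_transpose_mul_self A).eigenvectorUnitary.2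

lemma gramEigenvectors_mul_transpose (A : Matrix (Fin m) (Fin k) ℝ) :
    gramEigenvectors A * (gramEigenvectors A)ᵀ = 1 := by
  simpa [gramEigenvectors, star_eq_conjTranspose] using
    mem_unitaryGroup_iff.mp (isHermitian_transpose_mul_self A).eigenvectorUnitary.2

lemma diagonal_gramEigenvalues_mul_transpose (A : Matrix (Fin m) (Fin k) ℝ) :
    diagonal (gramEigenvalues A) * (gramEigenvectors A)ᵀ = (gramEigenvectors A)ᵀ * (Aᵀ * A) := by
  have h : Aᵀ * A = gramEigenvectors A * diagonal (gramEigenvalues A) * (gramEigenvectors A)ᵀ := by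
    simpa [Unitary.conjStarAlgAut_apply, star_eq_conjTranspose, gramEigenvectors,
      gramEigenvalues] using (isHermitian_transpose_mul_self A).spectral_theorem
  rw [h, ← Matrix.mul_assoc, ← Matrix.mul_assoc, gramEigenvectors_transpose_mul, Matrix.one_mul]

lemma gram_mul_gramEigenvectors_eq_diagonal (A : Matrix (Fin m) (Fin k) ℝ) :
    (A * gramEigenvectors A)ᵀ * (A * gramEigenvectors A) = diagonal (gramEigenvalues A) := by
  rw [transpose_mul, Matrix.mul_assoc, ← Matrix.mul_assoc Aᵀ, ← Matrix.mul_assoc,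
    ← diagonal_gramEigenvalues_mul_transpose, Matrix.mul_assoc, gramEigenvectors_transpose_mul,
    Matrix.mul_one]

lemma specNorm_mul_conj_diagonal_le_one {A : Matrix (Fin m) (Fin k) ℝ}
    {P : Matrix (Fin k) (Fin k) ℝ} (hP : P * Pᵀ = 1) {ev c : Fin k → ℝ}
    (hAP : (A * P)ᵀ * (A * P) = diagonal ev) (hc : ∀ i, c i * ev i * c i ≤ 1) :
    specNorm (A * (P * diagonal c * Pᵀ)) ≤ 1 := by
  refine specNorm_le_of_mulVec_dotProduct_self_le zero_le_one fun x => ?_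
  have hZZ : (A * (P * diagonal c * Pᵀ))ᵀ * (A * (P * diagonal c * Pᵀ)) =
      P * diagonal (fun i => c i * ev i * c i) * Pᵀ := by
    rw [← diagonal_mul_diagonal, ← diagonal_mul_diagonal, ← hAP]
    simp only [transpose_mul, diagonal_transpose, transpose_transpose, Matrix.mul_assoc]
  have hx : x ⬝ᵥ x = x ⬝ᵥ ((P * diagonal 1 * Pᵀ) *ᵥ x) := by
    rw [show diagonal (1 : Fin k → ℝ) = 1 from diagonal_one, Matrix.mul_one, hP, one_mulVec]
  rw [mulVec_dotProduct_self, hZZ, one_pow, one_mul, hx, dotProduct_mulVec_conj_diagonal,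
    dotProduct_mulVec_conj_diagonal]
  exact Finset.sum_le_sum fun i _ => mul_le_mul_of_nonneg_right (hc i) (sq_nonneg _)

lemma finner_le_specNorm_mul_nuclearNorm (Z A : Matrix (Fin m) (Fin k) ℝ) :
    finner Z A ≤ specNorm Z * nuclearNorm A := by
  set P := gramEigenvectors A
  rw [← finner_mul_of_mul_transpose_eq_one (gramEigenvectors_mul_transpose A),
    finner_eq_sum_dotProduct, nuclearNorm_eq_sum_sqrt, Finset.mul_sum]
  refine Finset.sum_le_sum fun j _ => (dotProduct_le_sqrt_mul_sqrt _ _).trans ?_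
  have hA : (A * P)ᵀ j ⬝ᵥ (A * P)ᵀ j = gramEigenvalues A j := by
    rw [← transpose_mul_self_apply_self, gram_mul_gramEigenvectors_eq_diagonal, diagonal_apply_eq]
  have hZ := mul_col_dotProduct_self_le Z (gramEigenvectors_transpose_mul A) j
  rw [hA]
  gcongr
  exact Real.sqrt_le_left (specNorm_nonneg Z) |>.mpr hZ

/-- The witness is the polar factor `A (AᵀA)^{-1/2}`, written in the eigenbasis of `AᵀA`; the
convention `(√0)⁻¹ = 0` makes it vanish on the kernel of `A`. -/
lemma exists_finner_eq_nuclearNorm (A : Matrix (Fin m) (Fin k) ℝ) :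
    ∃ Z : Matrix (Fin m) (Fin k) ℝ, finner Z A = nuclearNorm A ∧ specNorm Z ≤ 1 ∧
      (∀ {r : ℕ} (U : Matrix (Fin r) (Fin m) ℝ), U * A = 0 → U * Z = 0) ∧
      (∀ {r : ℕ} (V : Matrix (Fin k) (Fin r) ℝ), A * V = 0 → Z * V = 0) := by
  set P := gramEigenvectors A
  set ev := gramEigenvalues A
  set c : Fin k → ℝ := fun i => (√(ev i))⁻¹
  have hPP : Pᵀ * P = 1 := gramEigenvectors_transpose_mul A
  have hAP : (A * P)ᵀ * (A * P) = diagonal ev := gram_mul_gramEigenvectors_eq_diagonal A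
  refine ⟨A * (P * diagonal c * Pᵀ), ?_, ?_, ?_, ?_⟩
  · have hZP : A * (P * diagonal c * Pᵀ) * P = A * P * diagonal c := by
      simp only [Matrix.mul_assoc, hPP, Matrix.mul_one]
    rw [← finner_mul_of_mul_transpose_eq_one (gramEigenvectors_mul_transpose A), hZP,
      finner_mul_left, hAP, finner_diagonal_right, nuclearNorm_eq_sum_sqrt]
    exact Finset.sum_congr rfl fun i _ => by rw [diagonal_apply_eq, inv_mul_eq_div, Real.div_sqrt]
  · refine specNorm_mul_conj_diagonal_le_one (gramEigenvectors_mul_transpose A) hAP fun i => ?_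
    rcases eq_or_ne (√(ev i)) 0 with h | h
    · simp [c, h]
    · have hev : 0 < ev i := Real.sqrt_pos.mp ((Real.sqrt_nonneg _).lt_of_ne' h)
      rw [mul_right_comm, ← mul_inv, Real.mul_self_sqrt hev.le, inv_mul_cancel₀ hev.ne']
  · intro r U hU
    rw [← Matrix.mul_assoc, hU, Matrix.zero_mul]
  · intro r V hV
    have hc : diagonal c = diagonal (fun i => c i * (ev i)⁻¹) * diagonal ev := by
      rw [diagonal_mul_diagonal]
      congr 1; funext i
      by_cases h : ev i = 0 <;> simp [c, h]
    rw [hc]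
    simp only [Matrix.mul_assoc]
    rw [← Matrix.mul_assoc (diagonal ev), diagonal_gramEigenvalues_mul_transpose]
    simp only [Matrix.mul_assoc, hV, Matrix.mul_zero]

lemma nuclearNorm_nonneg (A : Matrix (Fin m) (Fin k) ℝ) : 0 ≤ nuclearNorm A :=
  Finset.sum_nonneg fun _ _ => Real.sqrt_nonneg _

lemma finner_le_nuclearNorm {Z : Matrix (Fin m) (Fin k) ℝ} (hZ : specNorm Z ≤ 1)
    (A : Matrix (Fin m) (Fin k) ℝ) : finner Z A ≤ nuclearNorm A :=
  (finner_le_specNorm_mul_nuclearNorm Z A).trans (mul_le_of_le_one_left (nuclearNorm_nonneg A) hZ)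

lemma nuclearNorm_add_le (A B : Matrix (Fin m) (Fin k) ℝ) :
    nuclearNorm (A + B) ≤ nuclearNorm A + nuclearNorm B := by
  obtain ⟨Z, hZ, hZ1, -, -⟩ := exists_finner_eq_nuclearNorm (A + B)
  rw [← hZ, finner_add_right]
  exact add_le_add (finner_le_nuclearNorm hZ1 A) (finner_le_nuclearNorm hZ1 B)

lemma nuclearNorm_neg (A : Matrix (Fin m) (Fin k) ℝ) : nuclearNorm (-A) = nuclearNorm A := by
  simp [nuclearNorm]

lemma nuclearNorm_sub_le (A B : Matrix (Fin m) (Fin k) ℝ) :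
    nuclearNorm (A - B) ≤ nuclearNorm A + nuclearNorm B := by
  simpa [sub_eq_add_neg, nuclearNorm_neg] using nuclearNorm_add_le A (-B)

lemma frobNorm_le_nuclearNorm (A : Matrix (Fin m) (Fin k) ℝ) : frobNorm A ≤ nuclearNorm A := by
  have htrace : trace (Aᵀ * A) = ∑ i, √(gramEigenvalues A i) ^ 2 := by
    rw [(isHermitian_transpose_mul_self A).trace_eq_sum_eigenvalues]
    exact Finset.sum_congr rfl fun i _ => (Real.sq_sqrt (gramEigenvalues_nonneg A i)).symm
  rw [frobNorm_eq_sqrt_trace, Real.sqrt_le_left (nuclearNorm_nonneg A), htrace]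
  exact Finset.sum_sq_le_sq_sum_of_nonneg fun _ _ => Real.sqrt_nonneg _

lemma transpose_mul_mul_apply_self_le {r : ℕ} {U : Matrix (Fin m) (Fin r) ℝ}
    {V : Matrix (Fin k) (Fin r) ℝ} (hU : Uᵀ * U = 1) (hV : Vᵀ * V = 1)
    (Z : Matrix (Fin m) (Fin k) ℝ) (i : Fin r) : (Uᵀ * (Z * V)) i i ≤ specNorm Z := by
  calc (Uᵀ * (Z * V)) i i = Uᵀ i ⬝ᵥ (Z * V)ᵀ i := rfl
    _ ≤ √(Uᵀ i ⬝ᵥ Uᵀ i) * √((Z * V)ᵀ i ⬝ᵥ (Z * V)ᵀ i) := dotProduct_le_sqrt_mul_sqrt _ _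
    _ ≤ specNorm Z := by
      rw [← transpose_mul_self_apply_self, hU, one_apply_eq, Real.sqrt_one, one_mul]
      exact (Real.sqrt_le_left (specNorm_nonneg Z)).mpr (mul_col_dotProduct_self_le Z hV i)

end NuclearNorm

section TangentSpace

variable {n r : ℕ} {U V : Matrix (Fin n) (Fin r) ℝ}

lemma finner_eq_zero_of_mem_Tspace {Z Y : Matrix (Fin n) (Fin n) ℝ} (hUZ : Uᵀ * Z = 0)
    (hZV : Z * V = 0) (hY : Y ∈ Tspace U V) : finner Z Y = 0 := by
  obtain ⟨Q, R, rfl⟩ := hY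
  rw [finner_add_right, finner_mul_right, hUZ, finner_mul_transpose_right, hZV]
  simp [finner]

namespace IsOrthProjOnto

variable {PT : Matrix (Fin n) (Fin n) ℝ →ₗ[ℝ] Matrix (Fin n) (Fin n) ℝ}

lemma transpose_mul_sub_eq_zero (hPT : IsOrthProjOnto PT (Tspace U V))
    (X : Matrix (Fin n) (Fin n) ℝ) : Uᵀ * (X - PT X) = 0 := by
  refine finner_self_eq_zero ?_
  rw [← finner_mul_right]
  exact hPT.2.2 X _ ⟨(Uᵀ * (X - PT X))ᵀ, 0, by simp⟩

lemma sub_mul_eq_zero (hPT : IsOrthProjOnto PT (Tspace U V)) (X : Matrix (Fin n) (Fin n) ℝ) :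
    (X - PT X) * V = 0 := by
  refine finner_self_eq_zero ?_
  rw [← finner_mul_transpose_right]
  exact hPT.2.2 X _ ⟨0, (X - PT X) * V, by simp⟩

end IsOrthProjOnto

lemma specNorm_mul_transpose_add_le_one (hU : Uᵀ * U = 1) (hV : Vᵀ * V = 1)
    {Z : Matrix (Fin n) (Fin n) ℝ} (hZ : specNorm Z ≤ 1) (hUZ : Uᵀ * Z = 0) (hZV : Z * V = 0) :
    specNorm (U * Vᵀ + Z) ≤ 1 := by
  refine specNorm_le_of_mulVec_dotProduct_self_le zero_le_one fun x => ?_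
  set y := Vᵀ *ᵥ x
  set w := x - V *ᵥ y
  have hx : (U * Vᵀ + Z) *ᵥ x = U *ᵥ y + Z *ᵥ w := by
    rw [add_mulVec, ← mulVec_mulVec, mulVec_sub, mulVec_mulVec y Z V, hZV, zero_mulVec, sub_zero]
  have hcross : (U *ᵥ y) ⬝ᵥ (Z *ᵥ w) = 0 := by
    rw [dotProduct_mulVec, ← vecMul_transpose, vecMul_vecMul, hUZ, vecMul_zero, zero_dotProduct]
  have hUy : (U *ᵥ y) ⬝ᵥ (U *ᵥ y) = y ⬝ᵥ y := by
    rw [mulVec_dotProduct_self, hU, one_mulVec]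
  have hw : w ⬝ᵥ w = x ⬝ᵥ x - y ⬝ᵥ y := by
    have hVy : (V *ᵥ y) ⬝ᵥ (V *ᵥ y) = y ⬝ᵥ y := by
      rw [mulVec_dotProduct_self, hV, one_mulVec]
    have hxVy : x ⬝ᵥ (V *ᵥ y) = y ⬝ᵥ y := by
      rw [dotProduct_mulVec, ← mulVec_transpose]
    simp only [w, sub_dotProduct, dotProduct_sub, dotProduct_comm (V *ᵥ y) x, hVy, hxVy]
    ring
  have hZw : (Z *ᵥ w) ⬝ᵥ (Z *ᵥ w) ≤ w ⬝ᵥ w :=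
    (mulVec_dotProduct_self_le Z w).trans (mul_le_of_le_one_left (norm_toLp_sq w ▸ sq_nonneg _)
      (pow_le_one₀ (specNorm_nonneg Z) hZ))
  rw [hx, add_dotProduct, dotProduct_add, dotProduct_add, hcross, dotProduct_comm (Z *ᵥ w), hcross,
    hUy]
  linarith

lemma finner_mul_transpose_svd (hU : Uᵀ * U = 1) (hV : Vᵀ * V = 1) (σ : Fin r → ℝ) :
    finner (U * Vᵀ) (U * diagonal σ * Vᵀ) = ∑ i, σ i := by
  rw [finner_mul_transpose_right, Matrix.mul_assoc, hV, Matrix.mul_one, finner_mul_right, hU,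
    finner_diagonal_right]
  simp

lemma nuclearNorm_svd_le (hU : Uᵀ * U = 1) (hV : Vᵀ * V = 1) {σ : Fin r → ℝ}
    (hσ : ∀ i, 0 ≤ σ i) : nuclearNorm (U * diagonal σ * Vᵀ) ≤ ∑ i, σ i := by
  obtain ⟨Z, hZ, hZ1, -, -⟩ := exists_finner_eq_nuclearNorm (U * diagonal σ * Vᵀ)
  rw [← hZ, finner_mul_transpose_right, finner_mul_right, finner_diagonal_right]
  exact Finset.sum_le_sum fun i _ => mul_le_of_le_one_left (hσ i)
    ((transpose_mul_mul_apply_self_le hU hV Z i).trans hZ1)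

/-- The subgradient is `UVᵀ + Z`, with `Z ⊥ T` dual to `D - PT D`. -/
lemma nuclearNorm_svd_add_ge (hU : Uᵀ * U = 1) (hV : Vᵀ * V = 1) {σ : Fin r → ℝ}
    (hσ : ∀ i, 0 ≤ σ i) {PT : Matrix (Fin n) (Fin n) ℝ →ₗ[ℝ] Matrix (Fin n) (Fin n) ℝ}
    (hPT : IsOrthProjOnto PT (Tspace U V)) (D : Matrix (Fin n) (Fin n) ℝ) :
    nuclearNorm (U * diagonal σ * Vᵀ) + finner (U * Vᵀ) D + nuclearNorm (D - PT D) ≤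
      nuclearNorm (U * diagonal σ * Vᵀ + D) := by
  set L := U * diagonal σ * Vᵀ
  obtain ⟨Z, hZD, hZ1, hleft, hright⟩ := exists_finner_eq_nuclearNorm (D - PT D)
  have hUZ : Uᵀ * Z = 0 := hleft Uᵀ (hPT.transpose_mul_sub_eq_zero D)
  have hZV : Z * V = 0 := hright V (hPT.sub_mul_eq_zero D)
  have hZL : finner Z L = 0 :=
    finner_eq_zero_of_mem_Tspace hUZ hZV ⟨V * diagonal σ, 0, by simp [L, Matrix.mul_assoc]⟩
  have hZPD : finner Z (PT D) = 0 := finner_eq_zero_of_mem_Tspace hUZ hZV (hPT.1 D)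
  have hZD : finner Z D = nuclearNorm (D - PT D) := by
    rw [← hZD, finner_sub_right, hZPD, sub_zero]
  calc nuclearNorm L + finner (U * Vᵀ) D + nuclearNorm (D - PT D)
      ≤ finner (U * Vᵀ + Z) (L + D) := by
        rw [finner_add_left, finner_add_right, finner_add_right, finner_mul_transpose_svd hU hV,
          hZL, hZD]
        linarith [nuclearNorm_svd_le hU hV hσ]
    _ ≤ nuclearNorm (L + D) :=
        finner_le_nuclearNorm (specNorm_mul_transpose_add_le_one hU hV hZ1 hUZ hZV) _

end TangentSpace

section Certificate

variable {n r : ℕ}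

lemma frobNorm_projSet_le_of_projSet_le (Ω : Set (Fin n × Fin n))
    (PT : Matrix (Fin n) (Fin n) ℝ →ₗ[ℝ] Matrix (Fin n) (Fin n) ℝ) {D : Matrix (Fin n) (Fin n) ℝ}
    (hop : frobNorm (projSet Ω (PT D)) ≤ 1 / 2 * frobNorm D) :
    frobNorm (projSet Ω D) ≤ l1Norm (D - projSet Ω D) + 2 * nuclearNorm (D - PT D) := by
  have hT : frobNorm (projSet Ω D) ≤ frobNorm (projSet Ω (PT D)) + nuclearNorm (D - PT D) :=
    calc frobNorm (projSet Ω D) = frobNorm (projSet Ω (PT D) + projSet Ω (D - PT D)) := by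
          rw [← projSet_add, add_sub_cancel]
      _ ≤ frobNorm (projSet Ω (PT D)) + frobNorm (projSet Ω (D - PT D)) := frobNorm_add_le _ _
      _ ≤ frobNorm (projSet Ω (PT D)) + nuclearNorm (D - PT D) :=
          add_le_add le_rfl ((frobNorm_projSet_le _ _).trans (frobNorm_le_nuclearNorm _))
  have hΩ : frobNorm D ≤ frobNorm (projSet Ω D) + l1Norm (D - projSet Ω D) :=
    calc frobNorm D = frobNorm (projSet Ω D + (D - projSet Ω D)) := by rw [add_sub_cancel]
      _ ≤ frobNorm (projSet Ω D) + frobNorm (D - projSet Ω D) := frobNorm_add_le _ _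
      _ ≤ frobNorm (projSet Ω D) + l1Norm (D - projSet Ω D) :=
          add_le_add le_rfl (frobNorm_le_l1Norm _)
  linarith

lemma sub_projSet_suppSet_sub_smul_sgnMat (S X Y : Matrix (Fin n) (Fin n) ℝ) (c : ℝ) :
    (X - c • sgnMat S + Y) - projSet (suppSet S) (X - c • sgnMat S + Y) =
      (X + Y) - projSet (suppSet S) (X + Y) := by
  ext i j
  simp only [sub_projSet_apply]
  split_ifs with h
  · rfl
  · have hS : S i j = 0 := by simpa [suppSet] using h
    simp [sgnMat, hS]

variable {U V : Matrix (Fin n) (Fin r) ℝ}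
  {PT : Matrix (Fin n) (Fin n) ℝ →ₗ[ℝ] Matrix (Fin n) (Fin n) ℝ}

lemma neg_finner_le_of_certificate {S W D : Matrix (Fin n) (Fin n) ℝ} {lam : ℝ}
    (hlam0 : 0 ≤ lam) (hlam : lam ≤ 1 / 2) (hPT : IsOrthProjOnto PT (Tspace U V))
    (hop : frobNorm (projSet (suppSet S) (PT D)) ≤ 1 / 2 * frobNorm D)
    (hW1 : PT W = 0) (hW2 : specNorm W < 1 / 2)
    (hW3 : frobNorm (projSet (suppSet S) (U * Vᵀ - lam • sgnMat S + W)) ≤ lam / 4)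
    (hW4 : linfNorm ((U * Vᵀ + W) - projSet (suppSet S) (U * Vᵀ + W)) < lam / 2) :
    -finner (U * Vᵀ - lam • sgnMat S) D ≤
      3 / 4 * (nuclearNorm (D - PT D) + lam * l1Norm (D - projSet (suppSet S) D)) := by
  set Ω := suppSet S
  set G := U * Vᵀ - lam • sgnMat S + W
  have hWD : finner W D ≤ 1 / 2 * nuclearNorm (D - PT D) := by
    have hWT : finner W (PT D) = 0 := by simpa [hW1] using hPT.2.2 W (PT D) (hPT.1 D)
    calc finner W D = finner W (D - PT D) := by rw [finner_sub_right, hWT, sub_zero]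
      _ ≤ specNorm W * nuclearNorm (D - PT D) := finner_le_specNorm_mul_nuclearNorm _ _
      _ ≤ 1 / 2 * nuclearNorm (D - PT D) :=
          mul_le_mul_of_nonneg_right hW2.le (nuclearNorm_nonneg _)
  have hGΩ : -finner (projSet Ω G) (projSet Ω D) ≤ lam / 4 * frobNorm (projSet Ω D) :=
    (neg_le_abs _).trans ((abs_finner_le _ _).trans
      (mul_le_mul_of_nonneg_right hW3 (frobNorm_nonneg _)))
  have hGΩc :
      -finner (G - projSet Ω G) (D - projSet Ω D) ≤ lam / 2 * l1Norm (D - projSet Ω D) := by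
    refine (neg_le_abs _).trans ((abs_finner_le_linfNorm_mul_l1Norm _ _).trans ?_)
    rw [sub_projSet_suppSet_sub_smul_sgnMat]
    exact mul_le_mul_of_nonneg_right hW4.le (l1Norm_nonneg _)
  have hG : finner (U * Vᵀ - lam • sgnMat S) D = finner G D - finner W D := by
    rw [finner_add_left, add_sub_cancel_right]
  have hΩD := mul_le_mul_of_nonneg_left (frobNorm_projSet_le_of_projSet_le Ω PT hop) hlam0
  have hlamT := mul_le_mul_of_nonneg_right hlam (nuclearNorm_nonneg (D - PT D))
  rw [hG, finner_eq_finner_projSet_add Ω G D]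
  linarith

end Certificate

lemma nuclearNorm_add_l1Norm_le_of_descent {n r : ℕ} {U V : Matrix (Fin n) (Fin r) ℝ}
    (hU : Uᵀ * U = 1) (hV : Vᵀ * V = 1) {σ : Fin r → ℝ} (hσ : ∀ i, 0 ≤ σ i)
    {PT : Matrix (Fin n) (Fin n) ℝ →ₗ[ℝ] Matrix (Fin n) (Fin n) ℝ}
    (hPT : IsOrthProjOnto PT (Tspace U V)) {S M D : Matrix (Fin n) (Fin n) ℝ} {lam : ℝ}
    (hlam0 : 0 ≤ lam)
    (hcert : -finner (U * Vᵀ - lam • sgnMat S) D ≤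
      3 / 4 * (nuclearNorm (D - PT D) + lam * l1Norm (D - projSet (suppSet S) D)))
    (hH : nuclearNorm (U * diagonal σ * Vᵀ + (M + D)) + lam * l1Norm (S + (M - D)) ≤
      nuclearNorm (U * diagonal σ * Vᵀ) + lam * l1Norm S) :
    nuclearNorm (D - PT D) + lam * l1Norm (D - projSet (suppSet S) D) ≤
      4 * (nuclearNorm M + lam * l1Norm M) := by
  set L := U * diagonal σ * Vᵀ
  have hL : nuclearNorm (L + D) ≤ nuclearNorm (L + (M + D)) + nuclearNorm M := by
    have h := nuclearNorm_sub_le (L + (M + D)) M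
    rwa [show L + (M + D) - M = L + D by abel] at h
  have hS : l1Norm (S - D) ≤ l1Norm (S + (M - D)) + l1Norm M := by
    have h := l1Norm_sub_le (S + (M - D)) M
    rwa [show S + (M - D) - M = S - D by abel] at h
  have hLsub := nuclearNorm_svd_add_ge hU hV hσ hPT D
  have hSsub := mul_le_mul_of_nonneg_left (l1Norm_sub_ge S D) hlam0
  have hSM := mul_le_mul_of_nonneg_left hS hlam0
  rw [finner_sub_left, finner_smul_left] at hcert
  linarith

lemma exists_projGamma_eq {n : ℕ} (X : Matrix (Fin n) (Fin n) ℝ × Matrix (Fin n) (Fin n) ℝ) :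
    ∃ M D, projGamma X = (M, M) ∧ X - projGamma X = (D, -D) ∧ X = (M + D, M - D) := by
  refine ⟨(1 / 2 : ℝ) • (X.1 + X.2), (1 / 2 : ℝ) • (X.1 - X.2), rfl, ?_, ?_⟩ <;>
    ext <;> simp [projGamma] <;> ring

theorem stmt7_general {n r : ℕ} (L0 S0 : Matrix (Fin n) (Fin n) ℝ)
    (U V : Matrix (Fin n) (Fin r) ℝ) (σ : Fin r → ℝ)
    -- compact SVD of L₀
    (hU : Uᵀ * U = 1) (hV : Vᵀ * V = 1) (hσ : ∀ i, 0 < σ i)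
    (hSVD : L0 = U * Matrix.diagonal σ * Vᵀ)
    -- P_T is the orthogonal projection onto T
    (PT : Matrix (Fin n) (Fin n) ℝ →ₗ[ℝ] Matrix (Fin n) (Fin n) ℝ)
    (hPT : IsOrthProjOnto PT (Tspace U V))
    (lam : ℝ) (hlam : lam ≤ 1 / 2)
    -- ‖P_Ω P_T‖ ≤ 1/2
    (hop : ∀ X : Matrix (Fin n) (Fin n) ℝ,
      frobNorm (projSet (suppSet S0) (PT X)) ≤ (1 / 2) * frobNorm X)
    -- the dual certificate W
    (W : Matrix (Fin n) (Fin n) ℝ)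
    (hW1 : PT W = 0) (hW2 : specNorm W < 1 / 2)
    (hW3 : frobNorm (projSet (suppSet S0) (U * Vᵀ - lam • sgnMat S0 + W)) ≤ lam / 4)
    (hW4 : linfNorm ((U * Vᵀ + W) - projSet (suppSet S0) (U * Vᵀ + W)) < lam / 2)
    -- the pair H = (H_L, H_S) with ‖X₀ + H‖_♦ ≤ ‖X₀‖_♦
    (HL HS : Matrix (Fin n) (Fin n) ℝ)
    (hH : nuclearNorm (L0 + HL) + lam * l1Norm (S0 + HS) ≤
      nuclearNorm L0 + lam * l1Norm S0)
    -- H^Γ = P_Γ(H), H^{Γ⊥} = H − H^Γ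
    (HΓ HΓp : Matrix (Fin n) (Fin n) ℝ × Matrix (Fin n) (Fin n) ℝ)
    (hHΓ : HΓ = projGamma (HL, HS)) (hHΓp : HΓp = (HL, HS) - HΓ) :
    nuclearNorm (HΓp.1 - PT HΓp.1) + lam * l1Norm (HΓp.2 - projSet (suppSet S0) HΓp.2) ≤
      4 * (nuclearNorm HΓ.1 + lam * l1Norm HΓ.2) := by
  have hlam0 : 0 ≤ lam := by
    linarith [linfNorm_nonneg ((U * Vᵀ + W) - projSet (suppSet S0) (U * Vᵀ + W))]
  obtain ⟨M, D, hΓ, hΓp, hX⟩ := exists_projGamma_eq (HL, HS)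
  obtain ⟨rfl, rfl⟩ := Prod.mk.inj hX
  subst hSVD hHΓ hHΓp
  rw [hΓp, hΓ, projSet_neg, ← neg_sub', l1Norm_neg]
  exact nuclearNorm_add_l1Norm_le_of_descent hU hV (fun i => (hσ i).le) hPT hlam0
    (neg_finner_le_of_certificate hlam0 hlam hPT (hop D) hW1 hW2 hW3 hW4) hH

/-- Under ‖P_Ω P_T‖ ≤ 1/2, λ ≤ 1/2 and a dual certificate W, any pair H = (H_L, H_S) with
‖X₀ + H‖_♦ ≤ ‖X₀‖_♦ satisfies
‖P_{T⊥}(H^{Γ⊥}_L)‖_* + λ‖P_{Ω⊥}(H^{Γ⊥}_S)‖₁ ≤ 4‖H^Γ‖_♦. -/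
theorem stmt7 {n r : ℕ} (L0 S0 : Matrix (Fin n) (Fin n) ℝ)
    (U V : Matrix (Fin n) (Fin r) ℝ) (σ : Fin r → ℝ)
    -- compact SVD of L₀
    (hU : Uᵀ * U = 1) (hV : Vᵀ * V = 1) (hσ : ∀ i, 0 < σ i)
    (hSVD : L0 = U * Matrix.diagonal σ * Vᵀ) (hrank : L0.rank = r)
    -- P_T is the orthogonal projection onto T
    (PT : Matrix (Fin n) (Fin n) ℝ →ₗ[ℝ] Matrix (Fin n) (Fin n) ℝ)
    (hPT : IsOrthProjOnto PT (Tspace U V))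
    (lam : ℝ) (hlam : lam ≤ 1 / 2)
    -- ‖P_Ω P_T‖ ≤ 1/2
    (hop : ∀ X : Matrix (Fin n) (Fin n) ℝ,
      frobNorm (projSet (suppSet S0) (PT X)) ≤ (1 / 2) * frobNorm X)
    -- the dual certificate W
    (W : Matrix (Fin n) (Fin n) ℝ)
    (hW1 : PT W = 0) (hW2 : specNorm W < 1 / 2)
    (hW3 : frobNorm (projSet (suppSet S0) (U * Vᵀ - lam • sgnMat S0 + W)) ≤ lam / 4)
    (hW4 : linfNorm ((U * Vᵀ + W) - projSet (suppSet S0) (U * Vᵀ + W)) < lam / 2)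
    -- the pair H = (H_L, H_S) with ‖X₀ + H‖_♦ ≤ ‖X₀‖_♦
    (HL HS : Matrix (Fin n) (Fin n) ℝ)
    (hH : nuclearNorm (L0 + HL) + lam * l1Norm (S0 + HS) ≤
      nuclearNorm L0 + lam * l1Norm S0)
    -- H^Γ = P_Γ(H), H^{Γ⊥} = H − H^Γ
    (HΓ HΓp : Matrix (Fin n) (Fin n) ℝ × Matrix (Fin n) (Fin n) ℝ)
    (hHΓ : HΓ = projGamma (HL, HS)) (hHΓp : HΓp = (HL, HS) - HΓ) :
    nuclearNorm (HΓp.1 - PT HΓp.1) + lam * l1Norm (HΓp.2 - projSet (suppSet S0) HΓp.2) ≤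
      4 * (nuclearNorm HΓ.1 + lam * l1Norm HΓ.2) :=
  stmt7_general L0 S0 U V σ hU hV hσ hSVD PT hPT lam hlam hop W hW1 hW2 hW3 hW4 HL HS hH HΓ HΓp hHΓ
    hHΓp
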